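/- Every monomial u₁^{a₁}u₂^{a₂}u₃^{a₃}v₁^{b₁}v₂^{b₂}v₃^{b₃} in P of T-weight θ, i.e. with (a₁−b₁, a₂−b₂, a₃−b₃) = (c, c−1, c−2) for some integer c, is the product of one of the three monomials u₁²u₂, u₁v₃, v₂v₃² with a monomial of T-weight 0. Consequently, the image in R of the ℂ-linear span of the weight-θ monomials (the semi-invariant component R^T_θ) is generated as a module over R^T₀ by the images of u₁²u₂, u₁v₃ and v₂v₃². -/
import Mathlib


open MvPolynomial

/-- The ideal `I = (u₁v₁ − u₂v₂, u₂v₂ − u₃v₃)` of `P = ℂ[u₁,u₂,u₃,v₁,v₂,v₃]`,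
where `uᵢ = X (i−1)` and `vᵢ = X (i+2)`. -/
noncomputable def Irel : Ideal (MvPolynomial (Fin 6) ℂ) :=
  Ideal.span {X 0 * X 3 - X 1 * X 4, X 1 * X 4 - X 2 * X 5}

/-- The set of monomials of `T`-weight `0`: `a₁−b₁ = a₂−b₂ = a₃−b₃`. -/
def wt0Monomials : Set (MvPolynomial (Fin 6) ℂ) :=
  {m | ∃ a1 a2 a3 b1 b2 b3 : ℕ,
    (a1 : ℤ) - b1 = (a2 : ℤ) - b2 ∧ (a2 : ℤ) - b2 = (a3 : ℤ) - b3 ∧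
    m = X 0 ^ a1 * X 1 ^ a2 * X 2 ^ a3 * X 3 ^ b1 * X 4 ^ b2 * X 5 ^ b3}

/-- The set of monomials of `T`-weight `θ`:
`(a₁−b₁, a₂−b₂, a₃−b₃) = (c, c−1, c−2)` for some `c ∈ ℤ`. -/
def wtThetaMonomials : Set (MvPolynomial (Fin 6) ℂ) :=
  {m | ∃ a1 a2 a3 b1 b2 b3 : ℕ, ∃ c : ℤ,
    (a1 : ℤ) - b1 = c ∧ (a2 : ℤ) - b2 = c - 1 ∧ (a3 : ℤ) - b3 = c - 2 ∧
    m = X 0 ^ a1 * X 1 ^ a2 * X 2 ^ a3 * X 3 ^ b1 * X 4 ^ b2 * X 5 ^ b3}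

/-- `R^T₀`, the image in `R = P/I` of the ℂ-span of the weight-0 monomials. -/
noncomputable def RT0 : Submodule ℂ (MvPolynomial (Fin 6) ℂ ⧸ Irel) :=
  Submodule.map (Ideal.Quotient.mkₐ ℂ Irel).toLinearMap (Submodule.span ℂ wt0Monomials)


lemma part1 : ∀ a1 a2 a3 b1 b2 b3 : ℕ, ∀ c : ℤ,
      (a1 : ℤ) - b1 = c → (a2 : ℤ) - b2 = c - 1 → (a3 : ℤ) - b3 = c - 2 →
      ∃ g ∈ ({X 0 ^ 2 * X 1, X 0 * X 5, X 4 * X 5 ^ 2} :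
          Set (MvPolynomial (Fin 6) ℂ)),
        ∃ m ∈ wt0Monomials,
          X 0 ^ a1 * X 1 ^ a2 * X 2 ^ a3 * X 3 ^ b1 * X 4 ^ b2 * X 5 ^ b3 = g * m := by
  intro a1 a2 a3 b1 b2 b3 c h1 h2 h3
  rcases lt_trichotomy c 1 with hc | hc | hc
  · obtain ⟨b2', rfl⟩ : ∃ k, b2 = k + 1 := ⟨b2 - 1, by omega⟩
    obtain ⟨b3', rfl⟩ : ∃ k, b3 = k + 2 := ⟨b3 - 2, by omega⟩
    exact ⟨X 4 * X 5 ^ 2, Or.inr (Or.inr rfl),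
      X 0 ^ a1 * X 1 ^ a2 * X 2 ^ a3 * X 3 ^ b1 * X 4 ^ b2' * X 5 ^ b3',
      ⟨a1, a2, a3, b1, b2', b3', by push_cast at *; omega, by push_cast at *; omega, rfl⟩,
      by ring⟩
  · obtain ⟨a1', rfl⟩ : ∃ k, a1 = k + 1 := ⟨a1 - 1, by omega⟩
    obtain ⟨b3', rfl⟩ : ∃ k, b3 = k + 1 := ⟨b3 - 1, by omega⟩
    exact ⟨X 0 * X 5, Or.inr (Or.inl rfl),
      X 0 ^ a1' * X 1 ^ a2 * X 2 ^ a3 * X 3 ^ b1 * X 4 ^ b2 * X 5 ^ b3',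
      ⟨a1', a2, a3, b1, b2, b3', by push_cast at *; omega, by push_cast at *; omega, rfl⟩,
      by ring⟩
  · obtain ⟨a1', rfl⟩ : ∃ k, a1 = k + 2 := ⟨a1 - 2, by omega⟩
    obtain ⟨a2', rfl⟩ : ∃ k, a2 = k + 1 := ⟨a2 - 1, by omega⟩
    exact ⟨X 0 ^ 2 * X 1, Or.inl rfl,
      X 0 ^ a1' * X 1 ^ a2' * X 2 ^ a3 * X 3 ^ b1 * X 4 ^ b2 * X 5 ^ b3,
      ⟨a1', a2', a3, b1, b2, b3, by push_cast at *; omega, by push_cast at *; omega, rfl⟩,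
      by ring⟩

lemma mul_mem_theta {g : MvPolynomial (Fin 6) ℂ}
    (hg : g ∈ ({X 0 ^ 2 * X 1, X 0 * X 5, X 4 * X 5 ^ 2} :
      Set (MvPolynomial (Fin 6) ℂ))) :
    ∀ m ∈ wt0Monomials, m * g ∈ wtThetaMonomials := by
  rintro m ⟨a1, a2, a3, b1, b2, b3, h1, h2, rfl⟩
  rcases hg with rfl | rfl | rfl
  · exact ⟨a1 + 2, a2 + 1, a3, b1, b2, b3, (a1 : ℤ) - b1 + 2,
      by push_cast; omega, by push_cast; omega, by omega, by ring⟩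
  · exact ⟨a1 + 1, a2, a3, b1, b2, b3 + 1, (a1 : ℤ) - b1 + 1,
      by push_cast; omega, by omega, by push_cast; omega, by ring⟩
  · exact ⟨a1, a2, a3, b1, b2 + 1, b3 + 2, (a1 : ℤ) - b1,
      by omega, by push_cast; omega, by push_cast; omega, by ring⟩

lemma span_mul {g : MvPolynomial (Fin 6) ℂ}
    (hg : g ∈ ({X 0 ^ 2 * X 1, X 0 * X 5, X 4 * X 5 ^ 2} :
      Set (MvPolynomial (Fin 6) ℂ)))
    {w : MvPolynomial (Fin 6) ℂ} (hw : w ∈ Submodule.span ℂ wt0Monomials) :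
    w * g ∈ Submodule.span ℂ wtThetaMonomials := by
  have hle : Submodule.map (LinearMap.mulRight ℂ g) (Submodule.span ℂ wt0Monomials)
      ≤ Submodule.span ℂ wtThetaMonomials := by
    rw [Submodule.map_span]
    apply Submodule.span_le.2
    rintro _ ⟨m, hm, rfl⟩
    exact Submodule.subset_span (mul_mem_theta hg m hm)
  exact hle ⟨w, hw, rfl⟩

lemma mk_mem_RT0 {m : MvPolynomial (Fin 6) ℂ} (hm : m ∈ wt0Monomials) :
    Ideal.Quotient.mk Irel m ∈ RT0 :=
  ⟨m, Submodule.subset_span hm, rfl⟩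


/-- Every monomial of `T`-weight `θ` in `P` is the product of one of `u₁²u₂`,
`u₁v₃`, `v₂v₃²` with a weight-0 monomial; consequently the semi-invariant
component `R^T_θ` (the image in `R` of the ℂ-span of the weight-θ monomials) is
generated as a module over `R^T₀` by the images of `u₁²u₂`, `u₁v₃` and `v₂v₃²`. -/
theorem wtTheta_generation :
    (∀ a1 a2 a3 b1 b2 b3 : ℕ, ∀ c : ℤ,
      (a1 : ℤ) - b1 = c → (a2 : ℤ) - b2 = c - 1 → (a3 : ℤ) - b3 = c - 2 →
      ∃ g ∈ ({X 0 ^ 2 * X 1, X 0 * X 5, X 4 * X 5 ^ 2} :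
          Set (MvPolynomial (Fin 6) ℂ)),
        ∃ m ∈ wt0Monomials,
          X 0 ^ a1 * X 1 ^ a2 * X 2 ^ a3 * X 3 ^ b1 * X 4 ^ b2 * X 5 ^ b3 = g * m) ∧
    (∀ x : MvPolynomial (Fin 6) ℂ ⧸ Irel,
      x ∈ Submodule.map (Ideal.Quotient.mkₐ ℂ Irel).toLinearMap
            (Submodule.span ℂ wtThetaMonomials) ↔
        ∃ p ∈ RT0, ∃ q ∈ RT0, ∃ r ∈ RT0,
          x = p * Ideal.Quotient.mk Irel (X 0 ^ 2 * X 1)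
            + q * Ideal.Quotient.mk Irel (X 0 * X 5)
            + r * Ideal.Quotient.mk Irel (X 4 * X 5 ^ 2)) := by
  refine ⟨part1, fun x => ⟨?_, ?_⟩⟩
  · rintro ⟨w, hw, rfl⟩
    induction hw using Submodule.span_induction with
    | mem t ht =>
      obtain ⟨a1, a2, a3, b1, b2, b3, c, h1, h2, h3, rfl⟩ := ht
      obtain ⟨g, hg, m, hm, heq⟩ := part1 a1 a2 a3 b1 b2 b3 c h1 h2 h3
      rcases hg with rfl | rfl | rfl
      · exact ⟨Ideal.Quotient.mk Irel m, mk_mem_RT0 hm, 0, RT0.zero_mem, 0, RT0.zero_mem,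
          by simp [heq, mul_comm]⟩
      · exact ⟨0, RT0.zero_mem, Ideal.Quotient.mk Irel m, mk_mem_RT0 hm, 0, RT0.zero_mem,
          by simp [heq, mul_comm]⟩
      · exact ⟨0, RT0.zero_mem, 0, RT0.zero_mem, Ideal.Quotient.mk Irel m, mk_mem_RT0 hm,
          by simp [heq, mul_comm]⟩
    | zero => exact ⟨0, RT0.zero_mem, 0, RT0.zero_mem, 0, RT0.zero_mem, by simp⟩
    | add w1 w2 _ _ ih1 ih2 =>
      obtain ⟨p1, hp1, q1, hq1, r1, hr1, e1⟩ := ih1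
      obtain ⟨p2, hp2, q2, hq2, r2, hr2, e2⟩ := ih2
      exact ⟨p1 + p2, RT0.add_mem hp1 hp2, q1 + q2, RT0.add_mem hq1 hq2,
        r1 + r2, RT0.add_mem hr1 hr2, by rw [map_add, e1, e2]; ring⟩
    | smul a w _ ih =>
      obtain ⟨p, hp, q, hq, r, hr, e⟩ := ih
      exact ⟨a • p, RT0.smul_mem a hp, a • q, RT0.smul_mem a hq, a • r, RT0.smul_mem a hr,
        by rw [map_smul, e]; simp [smul_add, smul_mul_assoc]⟩
  · rintro ⟨p, ⟨p', hp', rfl⟩, q, ⟨q', hq', rfl⟩, r, ⟨r', hr', rfl⟩, rfl⟩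
    refine ⟨p' * (X 0 ^ 2 * X 1) + q' * (X 0 * X 5) + r' * (X 4 * X 5 ^ 2), ?_, by simp⟩
    exact Submodule.add_mem _
      (Submodule.add_mem _ (span_mul (Or.inl rfl) hp') (span_mul (Or.inr (Or.inl rfl)) hq'))
      (span_mul (Or.inr (Or.inr rfl)) hr')
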